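/- arXiv:2602.15000 — 4 statements merged into one kernel-verified Lean document; each statement's English description precedes it below -/
import Mathlib

section
/- Suppose the stated subgradient inclusions hold. Then ⟨Aᵀ(u⁺ − u), x^k − x⁺⟩ + (1/γ_k)⟨F_k(x^{k-1}) − F_k(x^k), x^k − x⁺⟩ ≤ γ_{k+1} ‖(1/γ_k)(F_k(x^{k-1}) − F_k(x^k)) + Aᵀ(u⁺ − u)‖². -/
/-! Subgradients are monotone, so the two inclusions give `0 ≤ ⟪w - γ_{k+1}⁻¹ • d, d⟫` with
`d = x^k - x⁺` and `w` the vector inside the norm; this alone forces `⟪w, d⟫ ≤ γ_{k+1} ‖w‖²`. -/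

open scoped RealInnerProductSpace
open ContinuousLinearMap

section InnerProductSpace

variable {E : Type*} [NormedAddCommGroup E] [InnerProductSpace ℝ E]

def HasSubgradientAt (f : E → ℝ) (s x : E) : Prop :=
  ∀ w, f x + ⟪s, w - x⟫ ≤ f w

theorem HasSubgradientAt.inner_sub_nonneg {f : E → ℝ} {s t x y : E}
    (hs : HasSubgradientAt f s x) (ht : HasSubgradientAt f t y) :
    0 ≤ ⟪s - t, x - y⟫ := by
  have hxy := hs y
  have hyx := ht x
  rw [← neg_sub x y, inner_neg_right] at hxy
  rw [inner_sub_left]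
  linarith

/-- Expand `0 ≤ ‖γ • w - d‖²` and feed in the hypothesis `‖d‖² ≤ γ ⟪w, d⟫`. -/
theorem real_inner_le_mul_norm_sq_of_inner_sub_smul_nonneg {γ : ℝ} (hγ : 0 < γ) {w d : E}
    (h : 0 ≤ ⟪w - γ⁻¹ • d, d⟫) : ⟪w, d⟫ ≤ γ * ‖w‖ ^ 2 := by
  have hd : ‖d‖ ^ 2 ≤ γ * ⟪w, d⟫ := by
    rw [inner_sub_left, real_inner_smul_left, real_inner_self_eq_norm_sq] at h
    have := mul_le_mul_of_nonneg_left h hγ.le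
    rwa [mul_sub, ← mul_assoc, mul_inv_cancel₀ hγ.ne', one_mul, mul_zero, sub_nonneg] at this
  have hsq : 0 ≤ ‖γ • w - d‖ ^ 2 := sq_nonneg _
  rw [norm_sub_sq_real, norm_smul, real_inner_smul_left, Real.norm_of_nonneg hγ.le] at hsq
  nlinarith

end InnerProductSpace

theorem alia_cross_term_bound_general {p r : ℕ}
    (f1 f2 : EuclideanSpace ℝ (Fin p) → ℝ)
    (A : EuclideanSpace ℝ (Fin p) →L[ℝ] EuclideanSpace ℝ (Fin r))
    (γk γk1 : ℝ) (hγk : 0 < γk) (hγk1 : 0 < γk1)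
    (xm xk xp : EuclideanSpace ℝ (Fin p)) (u up : EuclideanSpace ℝ (Fin r))
    (hsub1 : ∀ w, f1 xk
        + ⟪(1/γk) • ((xm - γk • gradient f2 xm) - xk) - adjoint A u, w - xk⟫ ≤ f1 w)
    (hsub2 : ∀ w, f1 xp
        + ⟪(1/γk1) • ((xk - γk1 • gradient f2 xk) - xp) - adjoint A up, w - xp⟫ ≤ f1 w) :
    ⟪adjoint A (up - u), xk - xp⟫
        + (1/γk) * ⟪(xm - γk • gradient f2 xm) - (xk - γk • gradient f2 xk), xk - xp⟫
      ≤ γk1 * ‖(1/γk) • ((xm - γk • gradient f2 xm) - (xk - γk • gradient f2 xk))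
          + adjoint A (up - u)‖^2 := by
  set w := (1/γk) • ((xm - γk • gradient f2 xm) - (xk - γk • gradient f2 xk))
    + adjoint A (up - u)
  have hdiff : (1/γk) • ((xm - γk • gradient f2 xm) - xk) - adjoint A u
      - ((1/γk1) • ((xk - γk1 • gradient f2 xk) - xp) - adjoint A up)
      = w - γk1⁻¹ • (xk - xp) := by
    simp only [w, map_sub]
    match_scalars <;> field_simp
  have hmono := HasSubgradientAt.inner_sub_nonneg hsub1 hsub2
  rw [hdiff] at hmono
  calc _ = ⟪w, xk - xp⟫ := by simp only [w, inner_add_left, real_inner_smul_left]; ring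
    _ ≤ γk1 * ‖w‖ ^ 2 := real_inner_le_mul_norm_sq_of_inner_sub_smul_nonneg hγk1 hmono

/-- Lemma 3, first inequality. Under the subgradient
inclusions coming from the optimality conditions of two consecutive ALiA
`x`-updates, with `F_k(z) = z − γ_k ∇f2(z)`, one has
`⟨Aᵀ(u⁺ − u), x^k − x⁺⟩ + (1/γ_k)⟨F_k(x^{k-1}) − F_k(x^k), x^k − x⁺⟩
  ≤ γ_{k+1} ‖(1/γ_k)(F_k(x^{k-1}) − F_k(x^k)) + Aᵀ(u⁺ − u)‖²`. -/
theorem alia_cross_term_bound {p r : ℕ}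
    (f1 f2 : EuclideanSpace ℝ (Fin p) → ℝ)
    (hf1 : ConvexOn ℝ Set.univ f1) (hf2 : Differentiable ℝ f2)
    (A : EuclideanSpace ℝ (Fin p) →L[ℝ] EuclideanSpace ℝ (Fin r))
    (γk γk1 : ℝ) (hγk : 0 < γk) (hγk1 : 0 < γk1)
    (xm xk xp : EuclideanSpace ℝ (Fin p)) (u up : EuclideanSpace ℝ (Fin r))
    (hsub1 : ∀ w, f1 xk
        + ⟪(1/γk) • ((xm - γk • gradient f2 xm) - xk) - adjoint A u, w - xk⟫ ≤ f1 w)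
    (hsub2 : ∀ w, f1 xp
        + ⟪(1/γk1) • ((xk - γk1 • gradient f2 xk) - xp) - adjoint A up, w - xp⟫ ≤ f1 w) :
    ⟪adjoint A (up - u), xk - xp⟫
        + (1/γk) * ⟪(xm - γk • gradient f2 xm) - (xk - γk • gradient f2 xk), xk - xp⟫
      ≤ γk1 * ‖(1/γk) • ((xm - γk • gradient f2 xm) - (xk - γk • gradient f2 xk))
          + adjoint A (up - u)‖^2 :=
  alia_cross_term_bound_general f1 f2 A γk γk1 hγk hγk1 xm xk xp u up hsub1 hsub2
end

section
/- Let f1 : ℝ^p → ℝ be convex, f2 : ℝ^p → ℝ convex and differentiable, A : ℝ^p → ℝ^r linear with adjoint Aᵀ, u ∈ ℝ^r, γ > 0, and let x⁻, x ∈ ℝ^p with x⁻ ≠ x. Suppose x minimizes z ↦ f1(z) + ⟨Aᵀu + ∇f2(x⁻), z⟩ + (1/(2γ))‖z − x⁻‖² over ℝ^p. Then, with f = f1 + f2 and ℓ = ⟨∇f2(x⁻) − ∇f2(x), x⁻ − x⟩/‖x⁻ − x‖², one has 0 ≤ f(x⁻) − f(x) + ⟨Aᵀu, x⁻ − x⟩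 − ((1 − ℓγ)/γ)‖x − x⁻‖². -/
/-!
With `g = f1 + ⟪Aᵀu + ∇f2(x⁻), ·⟫` convex, the minimized objective
`g + ‖· - x⁻‖² / (2γ)` is `γ⁻¹`-strongly convex, so comparing its minimizer `x` with `x⁻` gives
`g x + ‖x - x⁻‖² / γ ≤ g x⁻`. The gradient inequality for `f2` at `x` gives
`⟪∇f2(x), x⁻ - x⟫ ≤ f2(x⁻) - f2(x)`, and `ℓ ‖x⁻ - x‖²` is exactly
`⟪∇f2(x⁻) - ∇f2(x), x⁻ - x⟫`; adding the two inequalities yields the claim.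
-/

open scoped RealInnerProductSpace
open ContinuousLinearMap Set Filter Topology

section ConvexAnalysis

variable {E : Type*} [NormedAddCommGroup E]

theorem ConvexOn.le_sub_of_hasFDerivAt [NormedSpace ℝ E] {s : Set E} {f : E → ℝ}
    {f' : E →L[ℝ] ℝ} {x y : E} (hf : ConvexOn ℝ s f) (hx : x ∈ s) (hy : y ∈ s)
    (hd : HasFDerivAt f f' x) : f' (y - x) ≤ f y - f x := by
  have hline : ConvexOn ℝ (AffineMap.lineMap (k := ℝ) x y ⁻¹' s) (f ∘ AffineMap.lineMap x y) :=
    hf.comp_affineMap _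
  have hderiv : HasDerivAt (f ∘ AffineMap.lineMap (k := ℝ) x y) (f' (y - x)) 0 := by
    rw [← AffineMap.lineMap_apply_zero x y (k := ℝ)] at hd
    exact hd.comp_hasDerivAt 0 AffineMap.hasDerivAt_lineMap
  simpa [slope] using hline.le_slope_of_hasDerivAt (x := 0) (y := 1) (by simpa) (by simpa)
    one_pos hderiv

theorem ConvexOn.inner_le_sub_of_hasGradientAt [InnerProductSpace ℝ E] [CompleteSpace E]
    {s : Set E} {f : E → ℝ} {g x y : E} (hf : ConvexOn ℝ s f) (hx : x ∈ s) (hy : y ∈ s)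
    (hd : HasGradientAt f g x) :
    ⟪g, y - x⟫ ≤ f y - f x := by
  simpa using hf.le_sub_of_hasFDerivAt hx hy hd.hasFDerivAt

theorem StrongConvexOn.add_sq_norm_sub_le_of_isMinOn [NormedSpace ℝ E] {s : Set E} {m : ℝ}
    {f : E → ℝ} {x y : E} (hf : StrongConvexOn s m f) (hmin : IsMinOn f s x)
    (hx : x ∈ s) (hy : y ∈ s) : f x + m / 2 * ‖x - y‖ ^ 2 ≤ f y := by
  -- compare `f x` with the value at `b • x + (1 - b) • y`, then let `b → 1`
  have hbelow : ∀ b ∈ Ioo (0 : ℝ) 1, b * (m / 2 * ‖x - y‖ ^ 2) ≤ f y - f x := by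
    rintro b ⟨hb0, hb1⟩
    have hconv := hf.2 hx hy hb0.le (sub_nonneg.2 hb1.le) (add_sub_cancel b 1)
    have hle := isMinOn_iff.1 hmin _
      (hf.1 hx hy hb0.le (sub_nonneg.2 hb1.le) (add_sub_cancel b 1))
    simp only [smul_eq_mul] at hconv
    have : (1 - b) * (b * (m / 2 * ‖x - y‖ ^ 2)) ≤ (1 - b) * (f y - f x) := by
      linear_combination hle + hconv
    exact le_of_mul_le_mul_left this (sub_pos.2 hb1)
  have hlim : Tendsto (fun b : ℝ => b * (m / 2 * ‖x - y‖ ^ 2)) (𝓝[<] 1)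
      (𝓝 (m / 2 * ‖x - y‖ ^ 2)) := by
    simpa using tendsto_nhdsWithin_of_tendsto_nhds ((continuous_mul_const _).tendsto (1 : ℝ))
  linarith [le_of_tendsto hlim (eventually_of_mem (Ioo_mem_nhdsLT zero_lt_one) hbelow)]

theorem ConvexOn.strongConvexOn_add_sq_norm_sub [InnerProductSpace ℝ E] {s : Set E} {g : E → ℝ}
    (hg : ConvexOn ℝ s g) (m : ℝ) (a : E) :
    StrongConvexOn s m fun z => g z + m / 2 * ‖z - a‖ ^ 2 := by
  have hquad : ∀ z, g z + m / 2 * ‖z - a‖ ^ 2 - m / 2 * ‖z‖ ^ 2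
      = g z + innerSL ℝ (-(m • a)) z + m / 2 * ‖a‖ ^ 2 := by
    intro z
    rw [norm_sub_sq_real, innerSL_apply_apply, inner_neg_left, real_inner_smul_left,
      real_inner_comm]
    ring
  rw [strongConvexOn_iff_convex]
  simp_rw [hquad]
  exact (hg.add ((innerSL ℝ (-(m • a))).toLinearMap.convexOn hg.1)).add_const _

theorem ConvexOn.add_sq_norm_sub_div_le_of_isMinOn [InnerProductSpace ℝ E] {s : Set E}
    {g : E → ℝ} {γ : ℝ} {a x : E} (hg : ConvexOn ℝ s g)
    (hmin : IsMinOn (fun z => g z + ‖z - a‖ ^ 2 / (2 * γ)) s x) (hx : x ∈ s) (ha : a ∈ s) :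
    g x + ‖x - a‖ ^ 2 / γ ≤ g a := by
  have hobj : (fun z => g z + ‖z - a‖ ^ 2 / (2 * γ))
      = fun z => g z + γ⁻¹ / 2 * ‖z - a‖ ^ 2 := by
    ext z
    ring
  rw [hobj] at hmin
  have h := (hg.strongConvexOn_add_sq_norm_sub γ⁻¹ a).add_sq_norm_sub_le_of_isMinOn hmin hx ha
  rw [sub_self, norm_zero] at h
  linear_combination h

end ConvexAnalysis

/-- the one-step inequality \eqref{eq:lemA1-4} of the paper.
If `x` minimizes `z ↦ f1(z) + ⟨Aᵀu + ∇f2(x⁻), z⟩ + ‖z − x⁻‖²/(2γ)` (the ALiA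
primal `x`-update), then, with `f = f1 + f2` and
`ℓ = ⟨∇f2(x⁻) − ∇f2(x), x⁻ − x⟩/‖x⁻ − x‖²`, one has
`0 ≤ f(x⁻) − f(x) + ⟨Aᵀu, x⁻ − x⟩ − ((1 − ℓγ)/γ)‖x − x⁻‖²`. -/
theorem alia_one_step_inequality {p r : ℕ}
    (f1 f2 : EuclideanSpace ℝ (Fin p) → ℝ)
    (hf1 : ConvexOn ℝ Set.univ f1)
    (hf2c : ConvexOn ℝ Set.univ f2) (hf2d : Differentiable ℝ f2)
    (A : EuclideanSpace ℝ (Fin p) →L[ℝ] EuclideanSpace ℝ (Fin r))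
    (u : EuclideanSpace ℝ (Fin r)) (γ : ℝ) (hγ : 0 < γ)
    (xm x : EuclideanSpace ℝ (Fin p)) (hne : xm ≠ x)
    (hmin : ∀ z, f1 x + ⟪adjoint A u + gradient f2 xm, x⟫ + ‖x - xm‖^2 / (2*γ)
        ≤ f1 z + ⟪adjoint A u + gradient f2 xm, z⟫ + ‖z - xm‖^2 / (2*γ)) :
    0 ≤ (f1 xm + f2 xm) - (f1 x + f2 x) + ⟪adjoint A u, xm - x⟫
        - ((1 - (⟪gradient f2 xm - gradient f2 x, xm - x⟫ / ‖xm - x‖^2) * γ) / γ)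
          * ‖x - xm‖^2 := by
  have hprox := (hf1.add ((innerSL ℝ (adjoint A u + gradient f2 xm)).toLinearMap.convexOn
    convex_univ)).add_sq_norm_sub_div_le_of_isMinOn (isMinOn_univ_iff.2 hmin) (mem_univ x)
    (mem_univ xm)
  simp only [Pi.add_apply, coe_coe, innerSL_apply_apply, inner_add_left] at hprox
  have hgrad :=
    hf2c.inner_le_sub_of_hasGradientAt (mem_univ x) (mem_univ xm) (hf2d x).hasGradientAt
  have hN : ‖xm - x‖ ≠ 0 := norm_ne_zero_iff.2 (sub_ne_zero.2 hne)
  have hcurv : (1 - ⟪gradient f2 xm - gradient f2 x, xm - x⟫ / ‖xm - x‖ ^ 2 * γ) / γ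
      * ‖xm - x‖ ^ 2 = ‖xm - x‖ ^ 2 / γ - ⟪gradient f2 xm - gradient f2 x, xm - x⟫ := by
    field_simp
  rw [norm_sub_rev x xm] at hprox ⊢
  rw [hcurv]
  simp only [inner_sub_left, inner_sub_right] at hgrad ⊢
  linarith
end

section
/- Let f1 : ℝ^p → ℝ be convex, f2 : ℝ^p → ℝ convex and differentiable, A : ℝ^p → ℝ^r linear with adjoint Aᵀ, γ > 0, and F(z) = z − γ∇f2(z). Let x^{k-1}, x^k ∈ ℝ^p and u ∈ ℝ^r, and suppose (1/γ)(F(x^{k-1}) − x^k) − Aᵀu is a subgradient of f1 at x^k. Then for all x⋆, x⁺ ∈ ℝ^p: ⟨∇f2(x^k), x⋆ − x⁺⟩ ≤ f2(x⋆) − f2(x^k) + f1(x⁺) − f1(x^k) + (1/γ)⟨F(x^{k-1}) − F(x^k), x^k − x⁺⟩ + ⟨Aᵀu, x⁺ − x^k⟩. -/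
/-!
Add the first-order convexity inequality for `f2` at `x^k` (towards `x⋆`) to the subgradient
inequality for `f1` at `x^k` (towards `x⁺`). The inner products then recombine into the claimed
bound because `(1/γ)(F(x^{k-1}) − F(x^k)) = (1/γ)(F(x^{k-1}) − x^k) + ∇f2(x^k)`.
-/

open scoped RealInnerProductSpace
open ContinuousLinearMap

theorem ConvexOn.add_fderiv_sub_le {E : Type*} [NormedAddCommGroup E] [NormedSpace ℝ E]
    {s : Set E} {f : E → ℝ} {f' : E →L[ℝ] ℝ} {x y : E} (hf : ConvexOn ℝ s f)
    (hx : x ∈ s) (hy : y ∈ s) (hf' : HasFDerivAt f f' x) :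
    f x + f' (y - x) ≤ f y := by
  have hline :
      ConvexOn ℝ (AffineMap.lineMap (k := ℝ) x y ⁻¹' s) (f ∘ AffineMap.lineMap (k := ℝ) x y) :=
    hf.comp_affineMap _
  have hderiv : HasDerivAt (f ∘ AffineMap.lineMap (k := ℝ) x y) (f' (y - x)) 0 := by
    refine HasFDerivAt.comp_hasDerivAt_of_eq 0 hf' AffineMap.hasDerivAt_lineMap ?_
    simp
  have hslope := hline.le_slope_of_hasDerivAt (x := 0) (y := 1) (by simpa using hx)
    (by simpa using hy) one_pos hderiv
  simp only [slope_def_field, Function.comp_apply, AffineMap.lineMap_apply_zero,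
    AffineMap.lineMap_apply_one, sub_zero, div_one] at hslope
  linarith

theorem ConvexOn.add_inner_gradient_sub_le {E : Type*} [NormedAddCommGroup E]
    [InnerProductSpace ℝ E] [CompleteSpace E]
    {s : Set E} {f : E → ℝ} {x y : E} (hf : ConvexOn ℝ s f)
    (hx : x ∈ s) (hy : y ∈ s) (hd : DifferentiableAt ℝ f x) :
    f x + ⟪gradient f x, y - x⟫ ≤ f y := by
  simpa using hf.add_fderiv_sub_le hx hy hd.hasGradientAt.hasFDerivAt

theorem alia_A1_bound_general {p r : ℕ}
    (f1 f2 : EuclideanSpace ℝ (Fin p) → ℝ)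
    (hf2c : ConvexOn ℝ Set.univ f2) (hf2d : Differentiable ℝ f2)
    (A : EuclideanSpace ℝ (Fin p) →L[ℝ] EuclideanSpace ℝ (Fin r))
    (γ : ℝ) (hγ : 0 < γ)
    (xm xk : EuclideanSpace ℝ (Fin p)) (u : EuclideanSpace ℝ (Fin r))
    (hsub : ∀ w, f1 xk
        + ⟪(1/γ) • ((xm - γ • gradient f2 xm) - xk) - adjoint A u, w - xk⟫ ≤ f1 w) :
    ∀ xs xp : EuclideanSpace ℝ (Fin p),
      ⟪gradient f2 xk, xs - xp⟫
        ≤ f2 xs - f2 xk + f1 xp - f1 xk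
          + (1/γ) * ⟪(xm - γ • gradient f2 xm) - (xk - γ • gradient f2 xk), xk - xp⟫
          + ⟪adjoint A u, xp - xk⟫ := by
  intro xs xp
  have hf2 : f2 xk + ⟪gradient f2 xk, xs - xk⟫ ≤ f2 xs :=
    hf2c.add_inner_gradient_sub_le (Set.mem_univ xk) (Set.mem_univ xs) (hf2d xk)
  have hf1 := hsub xp
  have hsplit : ⟪gradient f2 xk, xs - xp⟫
      = ⟪gradient f2 xk, xs - xk⟫
        + ⟪(1/γ) • ((xm - γ • gradient f2 xm) - xk) - adjoint A u, xp - xk⟫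
        + (1/γ) * ⟪(xm - γ • gradient f2 xm) - (xk - γ • gradient f2 xk), xk - xp⟫
        + ⟪adjoint A u, xp - xk⟫ := by
    simp only [inner_sub_left, inner_sub_right, real_inner_smul_left]
    field_simp
    ring
  linarith

/-- the bound (A1) in the proof of the descent lemma. If
`(1/γ)(F(x^{k-1}) − x^k) − Aᵀu` is a subgradient of `f1` at `x^k`, where
`F(z) = z − γ∇f2(z)`, then for all `x⋆, x⁺`:
`⟨∇f2(x^k), x⋆ − x⁺⟩ ≤ f2(x⋆) − f2(x^k) + f1(x⁺) − f1(x^k)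
  + (1/γ)⟨F(x^{k-1}) − F(x^k), x^k − x⁺⟩ + ⟨Aᵀu, x⁺ − x^k⟩`. -/
theorem alia_A1_bound {p r : ℕ}
    (f1 f2 : EuclideanSpace ℝ (Fin p) → ℝ)
    (hf1 : ConvexOn ℝ Set.univ f1)
    (hf2c : ConvexOn ℝ Set.univ f2) (hf2d : Differentiable ℝ f2)
    (A : EuclideanSpace ℝ (Fin p) →L[ℝ] EuclideanSpace ℝ (Fin r))
    (γ : ℝ) (hγ : 0 < γ)
    (xm xk : EuclideanSpace ℝ (Fin p)) (u : EuclideanSpace ℝ (Fin r))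
    (hsub : ∀ w, f1 xk
        + ⟪(1/γ) • ((xm - γ • gradient f2 xm) - xk) - adjoint A u, w - xk⟫ ≤ f1 w) :
    ∀ xs xp : EuclideanSpace ℝ (Fin p),
      ⟪gradient f2 xk, xs - xp⟫
        ≤ f2 xs - f2 xk + f1 xp - f1 xk
          + (1/γ) * ⟪(xm - γ • gradient f2 xm) - (xk - γ • gradient f2 xk), xk - xp⟫
          + ⟪adjoint A u, xp - xk⟫ :=
  alia_A1_bound_general f1 f2 hf2c hf2d A γ hγ xm xk u hsub
end

section
/- Let U₁ ≥ 0 and γ > 0 be real numbers, K ≥ 1 an integer, and let γ_1, …, γ_{K+1} and P_0, …, P_K be real numbers with γ_k ≥ γ for k = 1, …, K+1, P_k ≥ 0 for k = 0, …, K, 3γ_k − 2γ_{k+1} ≥ 0 for k = 1, …, K, and 3γ_{K+1}P_K + Σ_{k=1}^{K} (3γ_k − 2γ_{k+1})P_{k-1} ≤ U₁. Then min_{k=0,…,K} P_k ≤ U₁ / (2γ_1 + Σ_{k=1}^{K} γ_k + γ_{K+1}) ≤ U₁ / ((K+3)γ). -/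
/-!
The telescoped descent inequality bounds a nonnegative combination of `P_0, …, P_K` by `U₁`.
Each `P_k` is at least the minimum, so the minimum times the total weight is at most `U₁`, and
the total weight `3γ_{K+1} + Σ_{k=1}^K (3γ_k − 2γ_{k+1})` telescopes to
`2γ_1 + Σ_{k=1}^K γ_k + γ_{K+1} ≥ (K+3)γ`.
-/

open Finset

namespace ALiA

theorem total_weight_eq (K : ℕ) (γs : ℕ → ℝ) :
    3 * γs (K + 1) + ∑ k ∈ Icc 1 K, (3 * γs k - 2 * γs (k + 1))
      = 2 * γs 1 + ∑ k ∈ Icc 1 K, γs k + γs (K + 1) := by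
  have h : ∑ k ∈ Icc 1 K, (3 * γs k - 2 * γs (k + 1))
      = ∑ k ∈ Icc 1 K, γs k - 2 * ∑ k ∈ Icc 1 K, (γs (k + 1) - γs k) := by
    rw [mul_sum, ← sum_sub_distrib]
    exact sum_congr rfl fun _ _ => by ring
  rw [h, ← Ico_add_one_right_eq_Icc, sum_Ico_sub γs (by omega)]
  ring

theorem mul_total_weight_le {K : ℕ} {γs P : ℕ → ℝ} {m : ℝ} (hγK : 0 ≤ γs (K + 1))
    (hmono : ∀ k, 1 ≤ k → k ≤ K → 0 ≤ 3 * γs k - 2 * γs (k + 1))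
    (hm : ∀ k, k ≤ K → m ≤ P k) :
    m * (3 * γs (K + 1) + ∑ k ∈ Icc 1 K, (3 * γs k - 2 * γs (k + 1)))
      ≤ 3 * γs (K + 1) * P K + ∑ k ∈ Icc 1 K, (3 * γs k - 2 * γs (k + 1)) * P (k - 1) := by
  rw [mul_add, mul_sum]
  refine add_le_add ?_ (sum_le_sum fun k hk => ?_)
  · rw [mul_comm]
    exact mul_le_mul_of_nonneg_left (hm K le_rfl) (by positivity)
  · obtain ⟨hk1, hkK⟩ := mem_Icc.mp hk
    rw [mul_comm]
    exact mul_le_mul_of_nonneg_left (hm (k - 1) (by omega)) (hmono k hk1 hkK)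

theorem mul_lower_le_total_weight (γ : ℝ) (K : ℕ) (γs : ℕ → ℝ)
    (hlb : ∀ k, 1 ≤ k → k ≤ K + 1 → γ ≤ γs k) :
    (K + 3) * γ ≤ 2 * γs 1 + ∑ k ∈ Icc 1 K, γs k + γs (K + 1) := by
  have hsum : ∑ _k ∈ Icc 1 K, γ ≤ ∑ k ∈ Icc 1 K, γs k :=
    sum_le_sum fun k hk => hlb k (mem_Icc.mp hk).1 (by linarith [(mem_Icc.mp hk).2])
  rw [sum_const, Nat.card_Icc, nsmul_eq_mul, Nat.add_sub_cancel] at hsum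
  linarith [hlb 1 le_rfl (by omega), hlb (K + 1) (by omega) le_rfl]

end ALiA

open ALiA in
/-- the telescoping rate argument behind the `O(1/K)` rate of
ALiA. If `γ_k ≥ γ > 0` for `k = 1,…,K+1`, `P_k ≥ 0` for `k = 0,…,K`,
`3γ_k − 2γ_{k+1} ≥ 0` for `k = 1,…,K`, and
`3γ_{K+1}P_K + Σ_{k=1}^K (3γ_k − 2γ_{k+1})P_{k-1} ≤ U₁`, then
`min_{k=0,…,K} P_k ≤ U₁/(2γ_1 + Σ_{k=1}^K γ_k + γ_{K+1}) ≤ U₁/((K+3)γ)`. -/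
theorem alia_telescoping_rate (U1 γ : ℝ) (hU : 0 ≤ U1) (hγ : 0 < γ)
    (K : ℕ) (γs P : ℕ → ℝ)
    (hlb : ∀ k, 1 ≤ k → k ≤ K + 1 → γ ≤ γs k)
    (hmono : ∀ k, 1 ≤ k → k ≤ K → 0 ≤ 3 * γs k - 2 * γs (k+1))
    (hsum : 3 * γs (K+1) * P K
        + ∑ k ∈ Finset.Icc 1 K, (3 * γs k - 2 * γs (k+1)) * P (k-1) ≤ U1) :
    ((Finset.range (K+1)).inf' (by simp) P)
        ≤ U1 / (2 * γs 1 + (∑ k ∈ Finset.Icc 1 K, γs k) + γs (K+1)) ∧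
    U1 / (2 * γs 1 + (∑ k ∈ Finset.Icc 1 K, γs k) + γs (K+1))
        ≤ U1 / ((K + 3) * γ) := by
  have hweight := mul_lower_le_total_weight γ K γs hlb
  have hpos : 0 < 2 * γs 1 + ∑ k ∈ Icc 1 K, γs k + γs (K + 1) :=
    lt_of_lt_of_le (by positivity) hweight
  have hmin : ∀ k, k ≤ K → (range (K + 1)).inf' (by simp) P ≤ P k := fun k hk =>
    inf'_le P (mem_range.mpr (by omega))
  have hγK : 0 ≤ γs (K + 1) := hγ.le.trans (hlb (K + 1) (by omega) le_rfl)
  refine ⟨(le_div_iff₀ hpos).mpr ?_, div_le_div_of_nonneg_left hU (by positivity) hweight⟩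
  rw [← total_weight_eq]
  exact (mul_total_weight_le hγK hmono hmin).trans hsum
end
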